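/- Let n, m be positive integers, let h ∈ ℝⁿ, let W be a real m×n matrix, let c > 0, and let η, ζ ∈ ℝ. Let f : ℝᵐ → ℝ be differentiable at z := Wh with gradient g := ∇f(z). Assume that no coordinate of z equals c or −c, and that the clipping residual d := z − clip(z; [−c,c]) is nonzero. Define the loss L on m×n matrices by L(V) = f(Vh) + ζ‖Vh − clip(Vh; [−c,c])‖₂. Then L is differentiable at W, and the updated matrix W′ = W − η∇L(W) satisfies the pre-activation update decomposition W′h − Wh = (−η)‖h‖₂² g + (−η)ζ‖h‖₂² d/‖d‖₂. -/

import Mathlib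

/-!
The loss is `F ∘ A` with `A V = V h` linear and `F z = f z + ζ ‖z - clip c z‖`. Since no
coordinate of `z = W h` sits at `±c`, the residual `y ↦ y - clip c y` is locally affine near `z`,
with derivative the diagonal projection `P` onto the clipped coordinates; the residual `d`
vanishes off those coordinates, so `P d = d` and `∇F(z) = g + ζ d / ‖d‖`. The chain rule gives
`∇(F ∘ A)(W) = A† ∇F(z)`, and `A† u = u hᵀ`, so `A A† = ‖h‖² • id`.
-/

/-- Coordinatewise clipping of a vector to the interval `[-c, c]`. -/
noncomputable def clip {m : ℕ} (c : ℝ) (z : EuclideanSpace ℝ (Fin m)) :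
    EuclideanSpace ℝ (Fin m) :=
  WithLp.toLp 2 (fun i => max (-c) (min (z i) c))

/-- Action of an `m × n` matrix (encoded as a point of the Euclidean space
`ℝ^(m × n)` with the Frobenius inner product) on a vector. -/
noncomputable def matVec {m n : ℕ} (V : EuclideanSpace ℝ (Fin m × Fin n))
    (h : EuclideanSpace ℝ (Fin n)) : EuclideanSpace ℝ (Fin m) :=
  WithLp.toLp 2 (fun i => ∑ j, V (i, j) * h j)

section GradientCalculus

variable {E F : Type*} [NormedAddCommGroup E] [InnerProductSpace ℝ E] [CompleteSpace E]
  [NormedAddCommGroup F] [InnerProductSpace ℝ F] [CompleteSpace F]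

theorem HasGradientAt.add {f₁ f₂ : E → ℝ} {g₁ g₂ x : E} (h₁ : HasGradientAt f₁ g₁ x)
    (h₂ : HasGradientAt f₂ g₂ x) : HasGradientAt (fun y => f₁ y + f₂ y) (g₁ + g₂) x := by
  rw [hasGradientAt_iff_hasFDerivAt] at *
  rw [map_add]; exact h₁.add h₂

theorem HasGradientAt.const_mul {f : E → ℝ} {g x : E} (hf : HasGradientAt f g x) (a : ℝ) :
    HasGradientAt (fun y => a * f y) (a • g) x := by
  rw [hasGradientAt_iff_hasFDerivAt] at *
  simpa only [map_smul] using hf.const_mul a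

theorem HasGradientAt.comp_hasFDerivAt {f : F → ℝ} {g : F} {R : E → F} {R' : E →L[ℝ] F} {x : E}
    (hf : HasGradientAt f g (R x)) (hR : HasFDerivAt R R' x) :
    HasGradientAt (fun y => f (R y)) (R'.adjoint g) x := by
  rw [hasGradientAt_iff_hasFDerivAt] at *
  refine (hf.comp x hR).congr_fderiv ?_
  ext v
  simp [InnerProductSpace.toDual_apply_apply, ContinuousLinearMap.adjoint_inner_left]

theorem hasGradientAt_norm {x : E} (hx : x ≠ 0) : HasGradientAt (‖·‖) (‖x‖⁻¹ • x) x := by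
  have := ((hasStrictFDerivAt_norm_sq x).hasFDerivAt).sqrt (by positivity)
  simp only [Real.sqrt_sq (norm_nonneg _)] at this
  rw [hasGradientAt_iff_hasFDerivAt]
  refine this.congr_fderiv ?_
  ext v
  simp [InnerProductSpace.toDual_apply_apply]
  ring

end GradientCalculus

section MatVec

variable {m n : ℕ}

noncomputable def matVecCLM (h : EuclideanSpace ℝ (Fin n)) :
    EuclideanSpace ℝ (Fin m × Fin n) →L[ℝ] EuclideanSpace ℝ (Fin m) :=
  LinearMap.toContinuousLinearMap
    { toFun := fun V => matVec V h
      map_add' := fun V V' => by ext i; simp [matVec, add_mul, Finset.sum_add_distrib]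
      map_smul' := fun a V => by ext i; simp [matVec, Finset.mul_sum, mul_assoc] }

@[simp]
theorem matVecCLM_apply (h : EuclideanSpace ℝ (Fin n)) (V : EuclideanSpace ℝ (Fin m × Fin n)) :
    matVecCLM h V = matVec V h :=
  rfl

theorem adjoint_matVecCLM_apply (h : EuclideanSpace ℝ (Fin n)) (u : EuclideanSpace ℝ (Fin m)) :
    (matVecCLM h).adjoint u = WithLp.toLp 2 (fun p : Fin m × Fin n => u p.1 * h p.2) := by
  refine ext_inner_right ℝ fun V => ?_
  rw [ContinuousLinearMap.adjoint_inner_left]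
  simp only [PiLp.inner_apply, RCLike.inner_apply, conj_trivial, matVecCLM_apply, matVec,
    Fintype.sum_prod_type, Finset.sum_mul]
  exact Finset.sum_congr rfl fun i _ => Finset.sum_congr rfl fun j _ => by ring

theorem matVecCLM_apply_adjoint (h : EuclideanSpace ℝ (Fin n)) (u : EuclideanSpace ℝ (Fin m)) :
    matVecCLM h ((matVecCLM h).adjoint u) = ‖h‖ ^ 2 • u := by
  ext i
  simp only [adjoint_matVecCLM_apply, matVecCLM_apply, matVec, EuclideanSpace.norm_sq_eq,
    Real.norm_eq_abs, sq_abs, PiLp.smul_apply, smul_eq_mul, Finset.sum_mul]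
  exact Finset.sum_congr rfl fun j _ => by ring

end MatVec

section ClipResidual

theorem hasDerivAt_sub_max_min {c t : ℝ} (hc : 0 ≤ c) (htc : t ≠ c) (htc' : t ≠ -c) :
    HasDerivAt (fun s => s - max (-c) (min s c)) (if c < |t| then 1 else 0) t := by
  rcases lt_or_gt_of_ne htc' with ht | ht
  · rw [if_pos (by rw [abs_of_neg (by linarith)]; linarith)]
    refine ((hasDerivAt_id t).sub_const (-c)).congr_of_eventuallyEq ?_
    filter_upwards [gt_mem_nhds ht] with s hs
    rw [min_eq_left (by linarith), max_eq_left hs.le, id]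
  rcases lt_or_gt_of_ne htc with ht' | ht'
  · rw [if_neg (abs_lt.2 ⟨ht, ht'⟩).not_gt]
    refine (hasDerivAt_const t (0 : ℝ)).congr_of_eventuallyEq ?_
    filter_upwards [Ioo_mem_nhds ht ht'] with s hs
    rw [min_eq_left hs.2.le, max_eq_right hs.1.le, sub_self]
  · rw [if_pos (by rwa [abs_of_pos (by linarith)])]
    refine ((hasDerivAt_id t).sub_const c).congr_of_eventuallyEq ?_
    filter_upwards [lt_mem_nhds ht'] with s hs
    rw [min_eq_right hs.le, max_eq_right (by linarith), id]

variable {m : ℕ} {c : ℝ} {z : EuclideanSpace ℝ (Fin m)}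

theorem hasFDerivAt_sub_clip (hc : 0 ≤ c) (hz : ∀ i, z i ≠ c ∧ z i ≠ -c) :
    HasFDerivAt (fun y => y - clip c y)
      (Matrix.toEuclideanCLM (𝕜 := ℝ) (Matrix.diagonal fun i => if c < |z i| then 1 else 0)) z := by
  rw [← hasFDerivWithinAt_univ, hasFDerivWithinAt_piLp]
  intro i
  rw [hasFDerivWithinAt_univ]
  have := (hasDerivAt_sub_max_min hc (hz i).1 (hz i).2).hasFDerivAt.comp z
    (PiLp.hasFDerivAt_apply (𝕜 := ℝ) 2 z i)
  refine this.congr_fderiv (ContinuousLinearMap.ext fun v => ?_)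
  simp [Matrix.mulVec_diagonal]

theorem adjoint_toEuclideanCLM_diagonal_sub_clip (z : EuclideanSpace ℝ (Fin m)) :
    (Matrix.toEuclideanCLM (𝕜 := ℝ)
        (Matrix.diagonal fun i => if c < |z i| then 1 else 0)).adjoint (z - clip c z) =
      z - clip c z := by
  rw [← ContinuousLinearMap.star_eq_adjoint, ← map_star, Matrix.star_eq_conjTranspose,
    Matrix.diagonal_conjTranspose, star_trivial]
  ext i
  simp only [Matrix.ofLp_toEuclideanCLM, Matrix.mulVec_diagonal, PiLp.sub_apply, clip]
  split_ifs with hi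
  · ring
  · obtain ⟨hlo, hhi⟩ := abs_le.1 (not_lt.1 hi)
    rw [min_eq_left hhi, max_eq_right hlo]
    ring

theorem hasGradientAt_norm_sub_clip (hc : 0 ≤ c) (hz : ∀ i, z i ≠ c ∧ z i ≠ -c)
    (hd : z - clip c z ≠ 0) :
    HasGradientAt (fun y => ‖y - clip c y‖) (‖z - clip c z‖⁻¹ • (z - clip c z)) z := by
  have := (hasGradientAt_norm hd).comp_hasFDerivAt (R := fun y => y - clip c y)
    (hasFDerivAt_sub_clip hc hz)
  rwa [map_smul, adjoint_toEuclideanCLM_diagonal_sub_clip] at this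

end ClipResidual

theorem stmt0_general {n m : ℕ}
    (h : EuclideanSpace ℝ (Fin n)) (W : EuclideanSpace ℝ (Fin m × Fin n))
    (c : ℝ) (hc : 0 < c) (η ζ : ℝ)
    (f : EuclideanSpace ℝ (Fin m) → ℝ) (g : EuclideanSpace ℝ (Fin m))
    (hf : HasGradientAt f g (matVec W h))
    (hz : ∀ i, matVec W h i ≠ c ∧ matVec W h i ≠ -c)
    (hd : matVec W h - clip c (matVec W h) ≠ 0) :
    DifferentiableAt ℝ
      (fun V : EuclideanSpace ℝ (Fin m × Fin n) =>
        f (matVec V h) + ζ * ‖matVec V h - clip c (matVec V h)‖) W ∧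
    matVec
        (W - η • gradient
          (fun V : EuclideanSpace ℝ (Fin m × Fin n) =>
            f (matVec V h) + ζ * ‖matVec V h - clip c (matVec V h)‖) W) h
      - matVec W h
      = ((-η) * ‖h‖ ^ 2) • g
        + ((-η) * ζ * ‖h‖ ^ 2 / ‖matVec W h - clip c (matVec W h)‖) •
            (matVec W h - clip c (matVec W h)) := by
  set d := matVec W h - clip c (matVec W h)
  have hL := (hf.add ((hasGradientAt_norm_sub_clip hc.le hz hd).const_mul ζ)).comp_hasFDerivAt
    (R := matVecCLM h) (matVecCLM h).hasFDerivAt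
  simp only [matVecCLM_apply] at hL
  refine ⟨hL.differentiableAt, ?_⟩
  rw [hL.gradient]
  calc matVecCLM h (W - η • (matVecCLM h).adjoint (g + ζ • ‖d‖⁻¹ • d)) - matVecCLM h W
      = (-η) • matVecCLM h ((matVecCLM h).adjoint (g + ζ • ‖d‖⁻¹ • d)) := by
        rw [map_sub, map_smul]; module
    _ = _ := by
        rw [matVecCLM_apply_adjoint]
        match_scalars <;> ring

theorem stmt0 {n m : ℕ} (hn : 0 < n) (hm : 0 < m)
    (h : EuclideanSpace ℝ (Fin n)) (W : EuclideanSpace ℝ (Fin m × Fin n))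
    (c : ℝ) (hc : 0 < c) (η ζ : ℝ)
    (f : EuclideanSpace ℝ (Fin m) → ℝ) (g : EuclideanSpace ℝ (Fin m))
    (hf : HasGradientAt f g (matVec W h))
    (hz : ∀ i, matVec W h i ≠ c ∧ matVec W h i ≠ -c)
    (hd : matVec W h - clip c (matVec W h) ≠ 0) :
    DifferentiableAt ℝ
      (fun V : EuclideanSpace ℝ (Fin m × Fin n) =>
        f (matVec V h) + ζ * ‖matVec V h - clip c (matVec V h)‖) W ∧
    matVec
        (W - η • gradient
          (fun V : EuclideanSpace ℝ (Fin m × Fin n) =>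
            f (matVec V h) + ζ * ‖matVec V h - clip c (matVec V h)‖) W) h
      - matVec W h
      = ((-η) * ‖h‖ ^ 2) • g
        + ((-η) * ζ * ‖h‖ ^ 2 / ‖matVec W h - clip c (matVec W h)‖) •
            (matVec W h - clip c (matVec W h)) :=
  stmt0_general h W c hc η ζ f g hf hz hd
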